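/- Variable allocation for a list succeeds: if state s is well-formed and the list of variables x₁:τ₁, …, xₙ:τₙ has pairwise distinct names, then one can allocate fresh locations l₁, …, lₙ of sizes size(τᵢ), extend the variable environment with bindings xᵢ ↦ (lᵢ, τᵢ), and the resulting state is well-formed (with respect to the store typing extended by lᵢ ↦ τᵢ* and the typing context extended by xᵢ ↦ τᵢ). -/

import Mathlib

/-- Types. -/
inductive Ty : Type
  | int | bool | unit
  | ptr : Ty → Ty
deriving DecidableEq

/-- Values. -/
inductive Val : Type
  | intV : Int → Val
  | boolV : Bool → Val
  | unitV : Val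
  | locV : Nat → Val
deriving DecidableEq

/-- Access permissions (CompCert-style), ordered with `Freeable` maximal. -/
inductive Perm : Type
  | nonempty | readable | writable | freeable
deriving DecidableEq

def Perm.toNat : Perm → Nat
  | .nonempty => 0
  | .readable => 1
  | .writable => 2
  | .freeable => 3

/-- Permission order. -/
def Perm.le (p q : Perm) : Prop := p.toNat ≤ q.toNat

/-- CompCert-style memory: contents, permissions, and a fresh-block counter. -/
structure Mem where
  contents : Nat → Option Val
  perm : Nat → Option Perm
  next : Nat

/-- `isValidAccess Θ l p`: `l` is an allocated address of `Θ` whose permission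
is at least `p`. -/
def isValidAccess (Θ : Mem) (l : Nat) (p : Perm) : Prop :=
  ∃ q, Θ.perm l = some q ∧ Perm.le p q

/-- Value typing relative to a store typing `Σ` (a location `l` has type
`τ*` when `Σ l = some τ`). -/
def ValHasTy (St : Nat → Option Ty) : Val → Ty → Prop
  | .intV _, .int => True
  | .boolV _, .bool => True
  | .unitV, .unit => True
  | .locV l, .ptr τ => St l = some τ
  | _, _ => False

/-- Store the value `v` at location `l`. -/
def setMem (Θ : Mem) (l : Nat) (v : Val) : Mem :=
  { Θ with contents := fun l' => if l' = l then some v else Θ.contents l' }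

/-- Allocate a fresh block (the bounds `lo`, `hi` delimit its size);
allocation is total and returns the fresh location. -/
def alloc (Θ : Mem) (_lo _hi : Int) : Mem × Nat :=
  ({ contents := Θ.contents,
     perm := fun l => if l = Θ.next then some Perm.freeable else Θ.perm l,
     next := Θ.next + 1 }, Θ.next)

/-- Program states: globals Δ, variable environment Ω, memory Θ. -/
structure State where
  glob : String → Option Nat
  env : String → Option (Nat × Ty)
  mem : Mem

/-- Extend a store typing. -/
def updSt (St : Nat → Option Ty) (l : Nat) (τ : Ty) : Nat → Option Ty :=
  fun l' => if l' = l then some τ else St l'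

/-- Extend a typing context. -/
def updTC (Γ : String → Option Ty) (x : String) (τ : Ty) : String → Option Ty :=
  fun y => if y = x then some τ else Γ y

/-- Extend a variable environment. -/
def updEnv (Ω : String → Option (Nat × Ty)) (x : String) (l : Nat) (τ : Ty) :
    String → Option (Nat × Ty) :=
  fun y => if y = x then some (l, τ) else Ω y

/-- Byte size of a type. -/
def sizeTy : Ty → Int
  | .int => 8
  | .bool => 1
  | .unit => 1
  | .ptr _ => 8

/-- Well-formed states (bindings of `Γ`-variables are well-typed locations,
`Σ`-locations are valid, and blocks above the counter are fresh). -/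
def WFState (Γ : String → Option Ty) (St : Nat → Option Ty) (s : State) : Prop :=
  (∀ x τ, Γ x = some τ →
      ∃ l, (s.env x = some (l, τ) ∨ s.glob x = some l) ∧ St l = some τ) ∧
  (∀ l τ, St l = some τ → isValidAccess s.mem l Perm.freeable) ∧
  (∀ l, s.mem.next ≤ l → s.mem.perm l = none ∧ s.mem.contents l = none)

/-- Allocate fresh locations for a list of typed variables, extending the
variable environment as we go, and return the list of fresh locations. -/
def allocVars : State → List (String × Ty) → State × List Nat
  | s, [] => (s, [])
  | s, (x, τ) :: rest =>
      let p := alloc s.mem 0 (sizeTy τ)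
      let s' : State := { s with mem := p.1, env := updEnv s.env x p.2 τ }
      let q := allocVars s' rest
      (q.1, p.2 :: q.2)

/-- Extend a typing context by a list of typed variables. -/
def extTC (Γ : String → Option Ty) (xs : List (String × Ty)) : String → Option Ty :=
  xs.foldl (fun Γ p => updTC Γ p.1 p.2) Γ

/-- Extend a store typing by a list of typed locations. -/
def extSt (St : Nat → Option Ty) (ps : List (Nat × Ty)) : Nat → Option Ty :=
  ps.foldl (fun St p => updSt St p.1 p.2) St

/-! Allocation hands out the counter `s.mem.next`, which by the freshness invariant lies above
every typed location, so one allocation step preserves well-formedness for the context and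
store typing extended by the new binding. The left folds defining `extTC` and `extSt` add the
bindings in allocation order, so the list case is an induction that generalizes `Γ`, `St`, `s`.
-/

theorem WFState.lt_next {Γ : String → Option Ty} {St : Nat → Option Ty} {s : State}
    (hwf : WFState Γ St s) {l : Nat} {τ : Ty} (hl : St l = some τ) : l < s.mem.next := by
  by_contra! hge
  obtain ⟨q, hq, -⟩ := hwf.2.1 l τ hl
  simp [(hwf.2.2 l hge).1] at hq

theorem WFState.allocVar {Γ : String → Option Ty} {St : Nat → Option Ty} {s : State}
    (hwf : WFState Γ St s) (x : String) (τ : Ty) (lo hi : Int) :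
    WFState (updTC Γ x τ) (updSt St s.mem.next τ)
      { s with mem := (alloc s.mem lo hi).1, env := updEnv s.env x (alloc s.mem lo hi).2 τ } := by
  have ⟨hvars, hlocs, hfresh⟩ := hwf
  refine ⟨fun y σ hy => ?_, fun l σ hl => ?_, fun l hl => ?_⟩
  · by_cases hyx : y = x
    · obtain rfl : τ = σ := by simpa [updTC, hyx] using hy
      exact ⟨s.mem.next, Or.inl (by simp [updEnv, alloc, hyx]), by simp [updSt]⟩
    · rw [updTC, if_neg hyx] at hy
      obtain ⟨l, hbound, hl⟩ := hvars y σ hy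
      have hne : l ≠ s.mem.next := (hwf.lt_next hl).ne
      refine ⟨l, ?_, by simp [updSt, hne, hl]⟩
      simpa [updEnv, hyx] using hbound
  · by_cases hne : l = s.mem.next
    · exact ⟨.freeable, by simp [alloc, hne], le_rfl⟩
    · rw [updSt, if_neg hne] at hl
      simpa [isValidAccess, alloc, hne] using hlocs l σ hl
  · have hlt : s.mem.next < l := hl
    simpa [alloc, hlt.ne'] using hfresh l hlt.le

theorem allocVars_succeeds_general
    (Γ : String → Option Ty) (St : Nat → Option Ty) (s : State)
    (xs : List (String × Ty))
    (hwf : WFState Γ St s) :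
    ∃ (s' : State) (ls : List Nat),
      allocVars s xs = (s', ls) ∧ ls.length = xs.length ∧
      WFState (extTC Γ xs) (extSt St (ls.zip (xs.map Prod.snd))) s' := by
  induction xs generalizing Γ St s with
  | nil => exact ⟨s, [], rfl, rfl, hwf⟩
  | cons p rest ih =>
    obtain ⟨x, τ⟩ := p
    obtain ⟨s', ls, hrun, hlen, hwf'⟩ := ih _ _ _ (hwf.allocVar x τ 0 (sizeTy τ))
    exact ⟨s', s.mem.next :: ls, by simp only [allocVars, hrun]; rfl, by simp [hlen], hwf'⟩

/-- variable allocation for a list succeeds.  If the names are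
pairwise distinct, fresh locations can be allocated for all variables and the
resulting state is well-formed with respect to the extended typing context
and the extended store typing. -/
theorem allocVars_succeeds
    (Γ : String → Option Ty) (St : Nat → Option Ty) (s : State)
    (xs : List (String × Ty))
    (hwf : WFState Γ St s)
    (hnodup : (xs.map Prod.fst).Nodup) :
    ∃ (s' : State) (ls : List Nat),
      allocVars s xs = (s', ls) ∧ ls.length = xs.length ∧
      WFState (extTC Γ xs) (extSt St (ls.zip (xs.map Prod.snd))) s' :=
  allocVars_succeeds_general Γ St s xs hwf
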